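/- arXiv:1303.1026 — 2 statements merged into one kernel-verified Lean document; each statement's English description precedes it below -/
import Mathlib

section
/- Let q ≥ 2 be a fixed integer. Then liminf_{n→∞} C(n,q)/(q^n/n) ≥ (q−1)^2·(2q−1)/(4q^4), where the liminf is taken over integers n tending to infinity. -/
/-!
Fix a letter `a` and let `k = ⌈log_q (2n)⌉`. Words that begin with `a ^ k` and in which, for
every `0 < s < n`, one of the letters at positions `s, …, s + k - 1` (as far as they exist) is
`≠ a` form a non-overlapping code: a prefix of length `m` of one codeword begins with
`a ^ min m k`, the suffix of length `m` of another does not. Among the `(q-1)² q^(n-k-2)` words `a ^ k x ⋯ y` with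
`x, y ≠ a`, those that are not codewords contain a run `a ^ k` starting at one of the `n - 2k - 1`
positions in `(k, n - k)`, so there are at most `n (q-1)² q^(n-2k-2)` of them. Since
`2n ≤ q ^ k ≤ 2nq`, this leaves at least `(q-1)²(2q-1)/(4q⁴) · q^n/n` codewords.

The liminf is only meaningful because the ratio is bounded: the `n` cyclic rotations of the
codewords of a non-overlapping code are pairwise distinct, so `C(n,q) ≤ q^n/n`.
-/

/-- Two words `u` and `v` of length `n` over alphabet `F` are overlapping if some
non-empty proper prefix of one equals a non-empty proper suffix of the other. -/
def Overlapping {F : Type*} {n : ℕ} (u v : Fin n → F) : Prop :=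
  ∃ m : ℕ, ∃ _h1 : 0 < m, ∃ h2 : m < n,
    ((∀ i : ℕ, ∀ hi : i < m, u ⟨i, hi.trans h2⟩ = v ⟨n - m + i, by omega⟩) ∨
     (∀ i : ℕ, ∀ hi : i < m, v ⟨i, hi.trans h2⟩ = u ⟨n - m + i, by omega⟩))

/-- A code `C ⊆ F^n` is non-overlapping if every two (not necessarily distinct)
codewords are non-overlapping. -/
def NonOverlappingCode {F : Type*} {n : ℕ} (C : Set (Fin n → F)) : Prop :=
  ∀ u ∈ C, ∀ v ∈ C, ¬ Overlapping u v

/-- `maxNOCode n q` is `C(n,q)`, the maximum cardinality of a non-overlapping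
`q`-ary code of length `n`. -/
noncomputable def maxNOCode (n q : ℕ) : ℕ :=
  sSup {m | ∃ C : Set (Fin n → Fin q), NonOverlappingCode C ∧ C.ncard = m}

open Finset Filter

section UpperBound

variable {F : Type*} {n : ℕ}

theorem NonOverlappingCode.rotate_ne {C : Set (Fin n → F)} (hC : NonOverlappingCode C)
    {u v : Fin n → F} (hu : u ∈ C) (hv : v ∈ C) {p p' : Fin n} (hp : p < p') :
    (fun i => u (i + p)) ≠ fun i => v (i + p') := by
  intro h
  have hp' := p'.isLt
  refine hC u hu v hv ⟨p' - p, by omega, by omega, Or.inr fun t ht => ?_⟩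
  have key := congrFun h ⟨n - p' + t, by omega⟩
  have e₁ : (⟨n - p' + t, by omega⟩ + p : Fin n) = ⟨n - (p' - p) + t, by omega⟩ := by
    ext
    rw [Fin.val_add, Nat.mod_eq_of_lt (by simp; omega)]
    simp only
    omega
  have e₂ : (⟨n - p' + t, by omega⟩ + p' : Fin n) = ⟨t, by omega⟩ := by
    ext
    rw [Fin.val_add]
    simp only
    rw [show n - p' + t + p' = t + n by omega, Nat.add_mod_right, Nat.mod_eq_of_lt (by omega)]
  rw [e₁, e₂] at key
  exact key.symm

theorem NonOverlappingCode.injective_rotate {C : Set (Fin n → F)} (hC : NonOverlappingCode C) :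
    Function.Injective fun x : C × Fin n => fun i => (x.1 : Fin n → F) (i + x.2) := by
  rintro ⟨⟨u, hu⟩, p⟩ ⟨⟨v, hv⟩, p'⟩ h
  simp only at h
  rcases lt_trichotomy p p' with hpp | rfl | hpp
  · exact (hC.rotate_ne hu hv hpp h).elim
  · have := NeZero.of_pos p.pos
    have huv : u = v := funext fun j => by simpa using congrFun h (j - p)
    subst huv
    rfl
  · exact (hC.rotate_ne hv hu hpp h.symm).elim

theorem NonOverlappingCode.ncard_mul_le [Fintype F] {C : Set (Fin n → F)}
    (hC : NonOverlappingCode C) : C.ncard * n ≤ Fintype.card F ^ n := by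
  simpa [Nat.card_coe_set_eq] using Nat.card_le_card_of_injective _ hC.injective_rotate

end UpperBound

section MaxNOCode

variable {n q : ℕ}

theorem bddAbove_ncard_nonOverlappingCode :
    BddAbove {m | ∃ C : Set (Fin n → Fin q), NonOverlappingCode C ∧ C.ncard = m} := by
  refine ⟨Nat.card (Fin n → Fin q), ?_⟩
  rintro m ⟨C, -, rfl⟩
  exact Set.ncard_le_card C

theorem exists_ncard_eq_maxNOCode :
    ∃ C : Set (Fin n → Fin q), NonOverlappingCode C ∧ C.ncard = maxNOCode n q :=
  show maxNOCode n q ∈ {m | ∃ C : Set (Fin n → Fin q), NonOverlappingCode C ∧ C.ncard = m} from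
  Nat.sSup_mem ⟨0, ∅, fun _ h => (Set.notMem_empty _ h).elim, Set.ncard_empty _⟩
    bddAbove_ncard_nonOverlappingCode

theorem NonOverlappingCode.ncard_le_maxNOCode {C : Set (Fin n → Fin q)}
    (hC : NonOverlappingCode C) : C.ncard ≤ maxNOCode n q :=
  le_csSup bddAbove_ncard_nonOverlappingCode ⟨C, hC, rfl⟩

theorem maxNOCode_mul_le : maxNOCode n q * n ≤ q ^ n := by
  obtain ⟨C, hC, hcard⟩ := exists_ncard_eq_maxNOCode (n := n) (q := q)
  simpa [hcard] using hC.ncard_mul_le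

end MaxNOCode

section Blackburn

variable {α : Type*} {n k : ℕ} {a : α}

def blackburnCode (n k : ℕ) (a : α) : Set (Fin n → α) :=
  {w | (∀ i : Fin n, (i : ℕ) < k → w i = a) ∧
    ∀ s, 0 < s → s < n → ∃ i : Fin n, s ≤ i ∧ (i : ℕ) < s + k ∧ w i ≠ a}

theorem nonOverlappingCode_blackburnCode : NonOverlappingCode (blackburnCode n k a) := by
  have key : ∀ u ∈ blackburnCode n k a, ∀ v ∈ blackburnCode n k a, ∀ m (h1 : 0 < m) (h2 : m < n),
      ¬ ∀ i (hi : i < m), u ⟨i, hi.trans h2⟩ = v ⟨n - m + i, by omega⟩ := by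
    rintro u ⟨hu, -⟩ v ⟨-, hv⟩ m h1 h2 h
    obtain ⟨i, hsi, his, hvi⟩ := hv (n - m) (by omega) (by omega)
    have hi : (⟨n - m + (i - (n - m)), by omega⟩ : Fin n) = i := by ext; simp only; omega
    rw [← hi, ← h _ (by omega), hu _ (by simp only; omega)] at hvi
    exact hvi rfl
  rintro u hu v hv ⟨m, h1, h2, h | h⟩
  exacts [key u hu v hv m h1 h2 h, key v hv u hu m h1 h2 h]

variable [Fintype α] [DecidableEq α] {Z N : Finset ℕ}

def patternWords (n : ℕ) (a : α) (Z N : Finset ℕ) : Finset (Fin n → α) :=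
  Fintype.piFinset fun i => if (i : ℕ) ∈ Z then {a} else if (i : ℕ) ∈ N then univ.erase a else univ

theorem mem_patternWords (hZN : Disjoint Z N) {w : Fin n → α} :
    w ∈ patternWords n a Z N ↔ ∀ i : Fin n, ((i : ℕ) ∈ Z → w i = a) ∧ ((i : ℕ) ∈ N → w i ≠ a) := by
  refine Fintype.mem_piFinset.trans (forall_congr' fun i => ?_)
  by_cases hZ : (i : ℕ) ∈ Z
  · simp [hZ, Finset.disjoint_left.1 hZN hZ]
  · by_cases hN : (i : ℕ) ∈ N <;> simp [hZ, hN]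

theorem card_patternWords (hZ : Z ⊆ range n) (hN : N ⊆ range n) (hZN : Disjoint Z N) :
    #(patternWords n a Z N) = (Fintype.card α - 1) ^ #N * Fintype.card α ^ (n - #Z - #N) := by
  set c : ℕ → ℕ := fun i => #(if i ∈ Z then {a} else if i ∈ N then univ.erase a else univ)
  rw [patternWords, Fintype.card_piFinset, Fin.prod_univ_eq_prod_range c,
    ← prod_sdiff (union_subset hZ hN), prod_union hZN]
  have hrest : ∏ i ∈ range n \ (Z ∪ N), c i = Fintype.card α ^ (n - #Z - #N) := by
    rw [prod_eq_pow_card (b := Fintype.card α) fun i hi => by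
      simp only [c, if_neg (notMem_union.1 (mem_sdiff.1 hi).2).1,
        if_neg (notMem_union.1 (mem_sdiff.1 hi).2).2, card_univ],
      card_sdiff_of_subset (union_subset hZ hN), card_union_of_disjoint hZN, card_range,
      Nat.sub_sub]
  have hZ : ∏ i ∈ Z, c i = 1 := prod_eq_one fun i hi => by simp only [c, if_pos hi, card_singleton]
  have hN : ∏ i ∈ N, c i = (Fintype.card α - 1) ^ #N :=
    prod_eq_pow_card fun i hi => by simp only [c, if_neg (Finset.disjoint_right.1 hZN hi),
      if_pos hi, card_erase_of_mem (mem_univ a), card_univ]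
  rw [hrest, hZ, hN, one_mul, mul_comm]

theorem mem_blackburnCode_of_notMem (hkn : k + 1 < n) {w : Fin n → α}
    (hD : w ∈ patternWords n a (range k) {k, n - 1})
    (hbad : ∀ j ∈ Ico (k + 1) (n - k), w ∉ patternWords n a (range k ∪ Ico j (j + k)) {k, n - 1}) :
    w ∈ blackburnCode n k a := by
  have hdisj : ∀ j ∈ Ico (k + 1) (n - k), Disjoint (range k ∪ Ico j (j + k)) {k, n - 1} :=
    fun j hj => Finset.disjoint_left.2 fun x hx hx' => by simp at hj hx hx'; omega
  rw [mem_patternWords (Finset.disjoint_left.2 fun x hx hx' => by simp at hx hx'; omega)] at hD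
  refine ⟨fun i hi => (hD i).1 (mem_range.2 hi), fun s hs0 hsn => ?_⟩
  by_cases hsk : s ≤ k
  · exact ⟨⟨k, by omega⟩, hsk, by simp only; omega, (hD _).2 (by simp)⟩
  by_cases hsn' : n ≤ s + k
  · exact ⟨⟨n - 1, by omega⟩, by simp only; omega, by simp only; omega, (hD _).2 (by simp)⟩
  have hs : s ∈ Ico (k + 1) (n - k) := by simp only [mem_Ico]; omega
  have hsbad := hbad s hs
  rw [mem_patternWords (hdisj s hs)] at hsbad
  obtain ⟨i, hi⟩ := not_forall.1 hsbad
  obtain ⟨hiZ, hia⟩ := Classical.not_imp.1 fun h => hi ⟨h, (hD i).2⟩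
  rcases mem_union.1 hiZ with hik | hiw
  · exact absurd ((hD i).1 hik) hia
  · exact ⟨i, (mem_Ico.1 hiw).1, (mem_Ico.1 hiw).2, hia⟩

theorem le_ncard_blackburnCode_add {b : ℕ} :
    (Fintype.card α - 1) ^ 2 * Fintype.card α ^ (b + k)
      ≤ (blackburnCode (b + 2 * k + 2) k a).ncard
        + (b + 1) * ((Fintype.card α - 1) ^ 2 * Fintype.card α ^ b) := by
  set n := b + 2 * k + 2
  set D := patternWords n a (range k) {k, n - 1}
  set bad : ℕ → Finset (Fin n → α) := fun j => patternWords n a (range k ∪ Ico j (j + k)) {k, n - 1}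
  have hN : #({k, n - 1} : Finset ℕ) = 2 := card_pair (by omega)
  have hNsub : ({k, n - 1} : Finset ℕ) ⊆ range n := by intro x; simp; omega
  have hD : #D = (Fintype.card α - 1) ^ 2 * Fintype.card α ^ (b + k) := by
    rw [card_patternWords (range_subset_range.2 (by omega)) hNsub
      (Finset.disjoint_left.2 fun x hx hx' => by simp at hx hx'; omega), hN, card_range]
    congr 2
    omega
  have hbad : ∀ j ∈ Ico (k + 1) (n - k),
      #(bad j) = (Fintype.card α - 1) ^ 2 * Fintype.card α ^ b := by
    intro j hj
    rw [mem_Ico] at hj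
    rw [card_patternWords (fun x => by simp; omega) hNsub
      (Finset.disjoint_left.2 fun x hx hx' => by simp at hx hx'; omega), hN,
      card_union_of_disjoint (Finset.disjoint_left.2 fun x hx hx' => by simp at hx hx'; omega),
      card_range, Nat.card_Ico]
    congr 2
    omega
  have hcode : #(D \ (Ico (k + 1) (n - k)).biUnion bad) ≤ (blackburnCode n k a).ncard := by
    rw [← Set.ncard_coe_finset]
    refine Set.ncard_le_ncard fun w hw => ?_
    simp only [coe_sdiff, Set.mem_sdiff, mem_coe, mem_biUnion, not_exists, not_and] at hw
    exact mem_blackburnCode_of_notMem (by omega) hw.1 hw.2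
  calc (Fintype.card α - 1) ^ 2 * Fintype.card α ^ (b + k)
      = #D := hD.symm
    _ ≤ #(D \ (Ico (k + 1) (n - k)).biUnion bad) + #((Ico (k + 1) (n - k)).biUnion bad) :=
      card_le_card_sdiff_add_card
    _ ≤ (blackburnCode n k a).ncard + ∑ j ∈ Ico (k + 1) (n - k), #(bad j) :=
      add_le_add hcode card_biUnion_le
    _ = (blackburnCode n k a).ncard
          + (b + 1) * ((Fintype.card α - 1) ^ 2 * Fintype.card α ^ b) := by
      rw [sum_congr rfl hbad, sum_const, Nat.card_Ico, smul_eq_mul]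
      congr 2
      omega

end Blackburn

theorem four_mul_add_two_le_two_pow_pred {m : ℕ} (hm : 6 ≤ m) : 4 * m + 2 ≤ 2 ^ (m - 1) := by
  induction m, hm using Nat.le_induction with
  | base => norm_num
  | succ m hm ih =>
    rw [Nat.add_sub_cancel, show m = m - 1 + 1 by omega, pow_succ]
    omega

theorem exists_two_mul_le_pow_le {q n : ℕ} (hq : 2 ≤ q) (hn : 12 ≤ n) :
    ∃ k, 2 * k + 2 ≤ n ∧ 2 * n ≤ q ^ k ∧ q ^ k ≤ 2 * n * q := by
  set k := Nat.clog q (2 * n)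
  have hk : 1 ≤ k := Nat.clog_pos (by omega) (by omega)
  have hlt : q ^ (k - 1) < 2 * n := Nat.pow_pred_clog_lt_self (by omega) (by omega)
  refine ⟨k, ?_, Nat.le_pow_clog (by omega) _, ?_⟩
  · by_contra! hkn
    have := four_mul_add_two_le_two_pow_pred (m := k) (by omega)
    have := Nat.pow_le_pow_left hq (k - 1)
    omega
  · calc q ^ k = q ^ (k - 1) * q := by rw [← pow_succ, Nat.sub_add_cancel hk]
      _ ≤ 2 * n * q := by gcongr

/-- `t ↦ (t - 1) / t ^ 2` is decreasing on `[2, 2Q]`: this is the inequality at `t = X / N`. -/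
theorem two_mul_sub_one_mul_sq_le {Q N X : ℝ} (hQ : 1 ≤ Q) (hX : 2 * N ≤ X)
    (hX' : X ≤ 2 * N * Q) : (2 * Q - 1) * X ^ 2 ≤ 4 * Q ^ 2 * N * (X - N) := by
  have h : 0 ≤ (2 * Q - 1) * X - 2 * N * Q := by nlinarith
  nlinarith [mul_nonneg (sub_nonneg.2 hX') h]

theorem maxNOCode_div_le_one {n q : ℕ} (hq : 0 < q) (hn : 0 < n) :
    (maxNOCode n q : ℝ) / ((q : ℝ) ^ n / n) ≤ 1 := by
  rw [div_le_one (by positivity), le_div_iff₀ (by positivity)]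
  exact_mod_cast maxNOCode_mul_le

theorem le_maxNOCode_div {n q : ℕ} (hq : 2 ≤ q) (hn : 12 ≤ n) :
    ((q : ℝ) - 1) ^ 2 * (2 * q - 1) / (4 * q ^ 4) ≤ (maxNOCode n q : ℝ) / ((q : ℝ) ^ n / n) := by
  obtain ⟨k, hkn, hlow, hhigh⟩ := exists_two_mul_le_pow_le hq hn
  obtain ⟨b, rfl⟩ : ∃ b, n = b + 2 * k + 2 := ⟨n - 2 * k - 2, by omega⟩
  have hM : ((q : ℝ) - 1) ^ 2 * q ^ (b + k) ≤ maxNOCode (b + 2 * k + 2) q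
      + (b + 1) * (((q : ℝ) - 1) ^ 2 * q ^ b) := by
    have h := (le_ncard_blackburnCode_add (b := b) (k := k) (a := (⟨0, by omega⟩ : Fin q))).trans
      (Nat.add_le_add_right nonOverlappingCode_blackburnCode.ncard_le_maxNOCode _)
    rw [Fintype.card_fin] at h
    have hq1 : ((q - 1 : ℕ) : ℝ) = q - 1 := by rw [Nat.cast_sub (by omega), Nat.cast_one]
    rw [← hq1]
    exact_mod_cast h
  set n := b + 2 * k + 2
  have hQ : (2 : ℝ) ≤ q := by exact_mod_cast hq
  have hN : (2 * n : ℝ) ≤ (q : ℝ) ^ k := by exact_mod_cast hlow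
  have hN' : (q : ℝ) ^ k ≤ 2 * n * q := by exact_mod_cast hhigh
  have hbN : (b + 1 : ℝ) ≤ n := by simp only [n]; push_cast; linarith
  have hpow : (q : ℝ) ^ n = q ^ b * ((q : ℝ) ^ k) ^ 2 * q ^ 2 := by
    simp only [n]; ring
  have hMlow : ((q : ℝ) - 1) ^ 2 * q ^ b * (q ^ k - n) ≤ maxNOCode n q := by
    have : ((q : ℝ) - 1) ^ 2 * q ^ b * (b + 1) ≤ ((q : ℝ) - 1) ^ 2 * q ^ b * n := by gcongr
    rw [pow_add] at hM
    linarith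
  rw [hpow, div_div_eq_mul_div, le_div_iff₀ (by positivity), div_mul_eq_mul_div,
    div_le_iff₀ (by positivity)]
  calc ((q : ℝ) - 1) ^ 2 * (2 * q - 1) * (q ^ b * ((q : ℝ) ^ k) ^ 2 * q ^ 2)
      = ((q : ℝ) - 1) ^ 2 * q ^ b * q ^ 2 * ((2 * q - 1) * ((q : ℝ) ^ k) ^ 2) := by ring
    _ ≤ ((q : ℝ) - 1) ^ 2 * q ^ b * q ^ 2 * (4 * q ^ 2 * n * (q ^ k - n)) :=
      mul_le_mul_of_nonneg_left (two_mul_sub_one_mul_sq_le (by linarith) hN hN') (by positivity)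
    _ = 4 * q ^ 4 * n * (((q : ℝ) - 1) ^ 2 * q ^ b * (q ^ k - n)) := by ring
    _ ≤ 4 * q ^ 4 * n * maxNOCode n q := mul_le_mul_of_nonneg_left hMlow (by positivity)
    _ = maxNOCode n q * n * (4 * q ^ 4) := by ring

/-- Lemma 2 of Blackburn, "Non-overlapping codes": for fixed `q ≥ 2`,
`liminf_{n→∞} C(n,q)/(q^n/n) ≥ (q-1)²(2q-1)/(4q⁴)`. -/
theorem stmt6 {q : ℕ} (hq : 2 ≤ q) :
    (((q : ℝ) - 1) ^ 2 * (2 * (q : ℝ) - 1)) / (4 * (q : ℝ) ^ 4)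
      ≤ Filter.liminf (fun n : ℕ => (maxNOCode n q : ℝ) / ((q : ℝ) ^ n / (n : ℝ)))
          Filter.atTop := by
  refine le_liminf_of_le (isCoboundedUnder_ge_of_eventually_le (x := 1) _ ?_) ?_
  · filter_upwards [eventually_ge_atTop 1] with n hn
    exact maxNOCode_div_le_one (by omega) hn
  · filter_upwards [eventually_ge_atTop 12] with n hn
    exact le_maxNOCode_div hq hn
end

section
/- Let q ≥ 2 be an integer. Then C(3,q) = [2q/3]^2·(q − [2q/3]), where [x] denotes the nearest integer to the real number x; that is, a largest q-ary non-overlapping code of length 3 has exactly [2q/3]^2·(q − [2q/3]) codewords. -/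
/-!
For the lower bound fix a set `K` of `k` letters: the words `xyz` with `x, y ∈ K` and `z ∉ K`
are pairwise non-overlapping, and there are `k²(q - k)` of them.

For the upper bound, a code of length 3 is non-overlapping iff no first letter is a last letter
and no prefix pair `(u₀, u₁)` is a suffix pair `(v₁, v₂)`. Let `A` and `B` be the sets of first and
last letters, of sizes `a` and `b`; they are disjoint, so `a + b ≤ q`. A codeword whose middle
letter lies in `A` is determined by its first letter and its suffix pair, which lies in `A × B`;
one whose middle letter lies in `B` by its prefix pair, in `A × B`, and its last letter; any other
by its middle letter, outside `A ∪ B`, and its first and last letters. The prefix and suffix pairs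
in `A × B` are disjoint, so `|C| ≤ (q - min a b)·ab ≤ s²(q - s)` with `s = q - min a b`, and over
the integers `s²(q - s)` is largest at `s = [2q/3]`.
-/

open Finset

theorem overlapping_fin_three_iff {F : Type*} (u v : Fin 3 → F) :
    Overlapping u v ↔
      u 0 = v 2 ∨ v 0 = u 2 ∨ (u 0 = v 1 ∧ u 1 = v 2) ∨ (v 0 = u 1 ∧ v 1 = u 2) := by
  constructor
  · rintro ⟨m, hm0, hm3, H⟩
    interval_cases m <;>
      simp only [Order.lt_one_iff, Order.lt_two_iff, Nat.add_one_sub_one, Nat.reduceSub] at H <;>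
      tauto
  · rintro (h | h | h | h)
    · exact ⟨1, one_pos, by norm_num, .inl fun i hi => by interval_cases i; simpa using h⟩
    · exact ⟨1, one_pos, by norm_num, .inr fun i hi => by interval_cases i; simpa using h⟩
    · exact ⟨2, two_pos, by norm_num, .inl fun i hi => by interval_cases i <;> simp [h]⟩
    · exact ⟨2, two_pos, by norm_num, .inr fun i hi => by interval_cases i <;> simp [h]⟩

theorem nonOverlappingCode_fin_three_iff {F : Type*} {C : Set (Fin 3 → F)} :
    NonOverlappingCode C ↔ ∀ u ∈ C, ∀ v ∈ C, u 0 ≠ v 2 ∧ ¬(u 0 = v 1 ∧ u 1 = v 2) := by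
  simp only [NonOverlappingCode, overlapping_fin_three_iff]
  exact ⟨fun h u hu v hv => by have := h u hu v hv; tauto,
    fun h u hu v hv => by have := h u hu v hv; have := h v hv u hu; tauto⟩

theorem eq_of_apply_fin_three {α : Type*} {u v : Fin 3 → α} (h₀ : u 0 = v 0) (h₁ : u 1 = v 1)
    (h₂ : u 2 = v 2) : u = v := by
  funext i; fin_cases i <;> assumption

theorem sq_mul_sub_le_of_three_mul_near {q k s : ℕ} (hk : 2 * q ≤ 3 * k + 1)
    (hk' : 3 * k ≤ 2 * q + 1) (hs : s ≤ q) : s ^ 2 * (q - s) ≤ k ^ 2 * (q - k) := by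
  have hkq : k ≤ q := by omega
  zify [hs, hkq]
  -- `k²(q - k) - s²(q - s) = (k - s)(q(k + s) - k² - ks - s²)`, and the second factor has the
  -- sign of `k - s` because `3k` is within `1` of `2q`.
  rcases lt_trichotomy s k with h | rfl | h
  · nlinarith [mul_nonneg (by positivity : (0:ℤ) ≤ s) (by omega : (0:ℤ) ≤ k - 1 - s),
      sq_nonneg (3 * (k:ℤ) - 2 * q),
      mul_nonneg (by omega : (0:ℤ) ≤ k - 1 - s) (by omega : (0:ℤ) ≤ k - 1 - s)]
  · rfl
  · have hh : 0 ≤ (s:ℤ) ^ 2 + (k - q) * s + k ^ 2 - q * k := by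
      nlinarith [mul_nonneg (by omega : (0:ℤ) ≤ s - k - 1) (by omega : (0:ℤ) ≤ q - s),
        mul_nonneg (by positivity : (0:ℤ) ≤ k) (by omega : (0:ℤ) ≤ 3 * k - 2 * q + 1)]
    nlinarith [mul_nonneg (by omega : (0:ℤ) ≤ s - k) hh]

theorem round_two_mul_div_three (q : ℕ) : round (2 * (q : ℚ) / 3) = ((2 * q + 1) / 3 : ℕ) := by
  rw [round_eq, show 2 * (q : ℚ) / 3 + 1 / 2 = ((4 * q + 3 : ℕ) : ℚ) / ((6 : ℕ) : ℚ) by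
    push_cast; ring, Rat.floor_natCast_div_natCast]
  omega

theorem le_sq_mul_sub_of_pair_counts {q a b s₁ s₂ n : ℕ} (hab : a + b ≤ q) (hs : s₁ + s₂ ≤ a * b)
    (hn : n ≤ a * s₁ + s₂ * b + (q - (a + b)) * (a * b)) : ∃ s ≤ q, n ≤ s ^ 2 * (q - s) := by
  obtain ⟨r, rfl⟩ : ∃ r, q = a + b + r := ⟨q - (a + b), by omega⟩
  rw [show a + b + r - (a + b) = r by omega] at hn
  rcases le_total a b with h | h
  · refine ⟨b + r, by omega, ?_⟩
    rw [show a + b + r - (b + r) = a by omega]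
    nlinarith [Nat.mul_le_mul_right s₁ h, Nat.mul_le_mul_left b hs,
      Nat.mul_le_mul_right (a * (b + r)) (Nat.le_add_right b r)]
  · refine ⟨a + r, by omega, ?_⟩
    rw [show a + b + r - (a + r) = b by omega]
    nlinarith [Nat.mul_le_mul_left s₂ h, Nat.mul_le_mul_left a hs,
      Nat.mul_le_mul_right (b * (a + r)) (Nat.le_add_right a r)]

section Counting

variable {F : Type*} [DecidableEq F] (C : Finset (Fin 3 → F))

def firstLetters : Finset F := C.image (· 0)

def lastLetters : Finset F := C.image (· 2)

def prefixPairs : Finset (F × F) := C.image fun u => (u 0, u 1)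

def suffixPairs : Finset (F × F) := C.image fun u => (u 1, u 2)

theorem card_filter_mid_mem_firstLetters_le :
    #{u ∈ C | u 1 ∈ firstLetters C} ≤
      #(firstLetters C) * #{p ∈ suffixPairs C | p.1 ∈ firstLetters C} := by
  rw [← card_product]
  refine card_le_card_of_injOn (fun u => (u 0, (u 1, u 2))) (fun u hu => ?_) fun u _ v _ h => ?_
  · obtain ⟨hu, hu₁⟩ := mem_filter.1 hu
    exact mem_product.2 ⟨mem_image_of_mem _ hu, mem_filter.2 ⟨mem_image_of_mem _ hu, hu₁⟩⟩
  · simp only [Prod.mk.injEq] at h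
    exact eq_of_apply_fin_three h.1 h.2.1 h.2.2

theorem card_filter_mid_mem_lastLetters_le :
    #{u ∈ C | u 1 ∈ lastLetters C} ≤
      #{p ∈ prefixPairs C | p.2 ∈ lastLetters C} * #(lastLetters C) := by
  rw [← card_product]
  refine card_le_card_of_injOn (fun u => ((u 0, u 1), u 2)) (fun u hu => ?_) fun u _ v _ h => ?_
  · obtain ⟨hu, hu₁⟩ := mem_filter.1 hu
    exact mem_product.2 ⟨mem_filter.2 ⟨mem_image_of_mem _ hu, hu₁⟩, mem_image_of_mem _ hu⟩
  · simp only [Prod.mk.injEq] at h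
    exact eq_of_apply_fin_three h.1.1 h.1.2 h.2

theorem card_filter_mid_notMem_le [Fintype F] :
    #{u ∈ C | u 1 ∉ firstLetters C ∪ lastLetters C} ≤
      #(firstLetters C ∪ lastLetters C)ᶜ * (#(firstLetters C) * #(lastLetters C)) := by
  rw [← card_product, ← card_product]
  refine card_le_card_of_injOn (fun u => (u 1, (u 0, u 2))) (fun u hu => ?_) fun u _ v _ h => ?_
  · obtain ⟨hu, hu₁⟩ := mem_filter.1 hu
    exact mem_product.2
      ⟨mem_compl.2 hu₁, mem_product.2 ⟨mem_image_of_mem _ hu, mem_image_of_mem _ hu⟩⟩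
  · simp only [Prod.mk.injEq] at h
    exact eq_of_apply_fin_three h.2.1 h.1 h.2.2

variable {C}

theorem disjoint_firstLetters_lastLetters (hC : NonOverlappingCode (C : Set (Fin 3 → F))) :
    Disjoint (firstLetters C) (lastLetters C) := by
  rw [nonOverlappingCode_fin_three_iff] at hC
  simp only [firstLetters, lastLetters, disjoint_left, mem_image]
  rintro _ ⟨u, hu, rfl⟩ ⟨v, hv, huv⟩
  exact (hC u hu v hv).1 huv.symm

theorem disjoint_prefixPairs_suffixPairs (hC : NonOverlappingCode (C : Set (Fin 3 → F))) :
    Disjoint (prefixPairs C) (suffixPairs C) := by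
  rw [nonOverlappingCode_fin_three_iff] at hC
  simp only [prefixPairs, suffixPairs, disjoint_left, mem_image]
  rintro _ ⟨u, hu, rfl⟩ ⟨v, hv, huv⟩
  exact (hC u hu v hv).2 (Prod.mk.inj huv.symm)

theorem card_filter_suffixPairs_add_card_filter_prefixPairs_le
    (hC : NonOverlappingCode (C : Set (Fin 3 → F))) :
    #{p ∈ suffixPairs C | p.1 ∈ firstLetters C} + #{p ∈ prefixPairs C | p.2 ∈ lastLetters C} ≤
      #(firstLetters C) * #(lastLetters C) := by
  rw [← card_union_of_disjoint
    ((disjoint_prefixPairs_suffixPairs hC).symm.mono (filter_subset _ _) (filter_subset _ _)),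
    ← card_product]
  refine card_le_card fun p hp => ?_
  simp only [mem_union, mem_filter, suffixPairs, prefixPairs, mem_image] at hp
  rcases hp with ⟨⟨u, hu, rfl⟩, h⟩ | ⟨⟨u, hu, rfl⟩, h⟩
  · exact mem_product.2 ⟨h, mem_image_of_mem _ hu⟩
  · exact mem_product.2 ⟨mem_image_of_mem _ hu, h⟩

theorem exists_card_le_sq_mul_sub [Fintype F] (hC : NonOverlappingCode (C : Set (Fin 3 → F))) :
    ∃ s ≤ Fintype.card F, #C ≤ s ^ 2 * (Fintype.card F - s) := by
  set A := firstLetters C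
  set B := lastLetters C
  have hAB := disjoint_firstLetters_lastLetters hC
  have hsplit : #C = #{u ∈ C | u 1 ∈ A} + #{u ∈ C | u 1 ∈ B} + #{u ∈ C | u 1 ∉ A ∪ B} := by
    rw [← card_union_of_disjoint (disjoint_filter.2 fun _ _ h => disjoint_left.1 hAB h),
      ← filter_or, filter_congr fun u _ => mem_union.symm, card_filter_add_card_filter_not]
  have hcompl : #(A ∪ B)ᶜ = Fintype.card F - (#A + #B) := by
    rw [card_compl, card_union_of_disjoint hAB]
  refine le_sq_mul_sub_of_pair_counts ?_
    (card_filter_suffixPairs_add_card_filter_prefixPairs_le hC) ?_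
  · rw [← card_union_of_disjoint hAB]
    exact card_le_univ _
  · rw [hsplit, ← hcompl]
    gcongr
    · exact card_filter_mid_mem_firstLetters_le C
    · exact card_filter_mid_mem_lastLetters_le C
    · exact card_filter_mid_notMem_le C

end Counting

theorem exists_nonOverlappingCode_ncard_eq {F : Type*} [Fintype F] [DecidableEq F] {k : ℕ}
    (hk : k ≤ Fintype.card F) :
    ∃ C : Set (Fin 3 → F), NonOverlappingCode C ∧ C.ncard = k ^ 2 * (Fintype.card F - k) := by
  obtain ⟨K, -, rfl⟩ := exists_subset_card_eq (s := (univ : Finset F)) (by simpa using hk)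
  have hmem (u : Fin 3 → F) : u ∈ Fintype.piFinset ![K, K, Kᶜ] ↔ u 0 ∈ K ∧ u 1 ∈ K ∧ u 2 ∉ K := by
    simp [Fin.forall_fin_succ]
  refine ⟨Fintype.piFinset ![K, K, Kᶜ], nonOverlappingCode_fin_three_iff.2 ?_, ?_⟩
  · simp only [mem_coe, hmem]
    rintro u ⟨hu₀, hu₁, -⟩ v ⟨-, -, hv₂⟩
    exact ⟨fun h => hv₂ (h ▸ hu₀), fun h => hv₂ (h.2 ▸ hu₁)⟩
  · rw [Set.ncard_coe_finset, Fintype.card_piFinset, Fin.prod_univ_three]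
    simp [card_compl, sq]

theorem NonOverlappingCode.exists_ncard_le_sq_mul_sub {F : Type*} [Fintype F]
    {C : Set (Fin 3 → F)} (hC : NonOverlappingCode C) :
    ∃ s ≤ Fintype.card F, C.ncard ≤ s ^ 2 * (Fintype.card F - s) := by
  classical
  rw [Set.ncard_eq_toFinset_card']
  exact exists_card_le_sq_mul_sub (by rwa [Set.coe_toFinset])

theorem stmt16_general {q : ℕ} :
    (maxNOCode 3 q : ℤ)
      = (round ((2 * (q : ℚ)) / 3)) ^ 2 * ((q : ℤ) - round ((2 * (q : ℚ)) / 3)) := by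
  rw [round_two_mul_div_three]
  set k := (2 * q + 1) / 3
  have hkq : k ≤ q := by omega
  have hmax : maxNOCode 3 q = k ^ 2 * (q - k) := by
    refine IsGreatest.csSup_eq ⟨?_, ?_⟩
    · simpa using exists_nonOverlappingCode_ncard_eq (F := Fin q) (by simpa using hkq)
    · rintro m ⟨C, hC, rfl⟩
      obtain ⟨s, hs, hCs⟩ := hC.exists_ncard_le_sq_mul_sub
      rw [Fintype.card_fin] at hs hCs
      exact hCs.trans (sq_mul_sub_le_of_three_mul_near (by omega) (by omega) hs)
  rw [hmax]
  push_cast [Nat.cast_sub hkq]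
  ring

/-- Theorem 5 of Blackburn, "Non-overlapping codes": `C(3,q) = [2q/3]² (q - [2q/3])`,
where `[x]` is the nearest integer to `x`. -/
theorem stmt16 {q : ℕ} (hq : 2 ≤ q) :
    (maxNOCode 3 q : ℤ)
      = (round ((2 * (q : ℚ)) / 3)) ^ 2 * ((q : ℤ) - round ((2 * (q : ℚ)) / 3)) :=
  stmt16_general
end
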